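/- Let n ≥ 3 be an odd integer, let h = (n+1)/2, and let i ≥ 1 be an integer. For an integer x, let ⟨x⟩ denote the representative of x modulo n lying in {0, …, n−1}. Define M : {1,…,n} × {1,…,n} → ℤ by M(r,c) = t₁ + t₂ + t₃ + t₄, where t₁ = n + 4ni + 1 + 2(c−1) if r ≡ c + 2i (mod n) and t₁ = 0 otherwise; t₂ = −(3n + 4ni + 1 + 2(c−1)) if r ≡ c + 2i + 1 (mod n) and t₂ = 0 otherwise; t₃ = −(n + 4ni + 2 + 2⟨c−h−1⟩) if r ≡ c + 2i − h (mod n) and t₃ = 0 otherwise; t₄ = 3n + 4ni + 2 + 2⟨c−h−1⟩ if r ≡ c + 2i + 1 − h (mod n) and t₄ = 0 otherwise. Then for every r ∈ {1,…,n} the sum ∑_{c=1}^{n} M(r,c) = 0, and for every c ∈ {1,…,n} the sum ∑_{r=1}^{n} M(r,c) = 0. -/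

import Mathlib

/-!
Each of the four diagonals meets every row and every column exactly once. In column `c` the four
entries are `a, -(a+2n), -b, b+2n` with `a = n+4ni+1+2(c-1)` and `b = n+4ni+2+2⟨c-h-1⟩`. A row
meets the third and fourth diagonals `h` columns to the right of where it meets the first and
second, and there `b` is one more than the `a` of the latter; so the row entries are
`a, -(a'+2n), -(a+1), a'+1+2n`.
-/

/-- The contribution of the `i`-th quadruple of added diagonals
`D_{1+2i}, D_{2+2i}, D_{h+2i}, D_{h+1+2i}` (case `n ≡ 3 (mod 4)`, `h = (n+1)/2`) to the
cell `(r, c)` (with `r, c ∈ {1,…,n}`).  Here `x % n` (with `n > 0`) is the representative of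
`x` modulo `n` lying in `{0,…,n−1}`, and the conditions `r ≡ … (mod n)` are written as
equality of such representatives. -/
def M3 (n h i : ℕ) (r c : ℕ) : ℤ :=
  let N : ℤ := n
  let H : ℤ := h
  let I : ℤ := i
  let R : ℤ := r
  let C : ℤ := c
  (if R % N = (C + 2 * I) % N then N + 4 * N * I + 1 + 2 * (C - 1) else 0) +
  (if R % N = (C + 2 * I + 1) % N then -(3 * N + 4 * N * I + 1 + 2 * (C - 1)) else 0) +
  (if R % N = (C + 2 * I - H) % N then -(N + 4 * N * I + 2 + 2 * ((C - H - 1) % N)) else 0) +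
  (if R % N = (C + 2 * I + 1 - H) % N then 3 * N + 4 * N * I + 2 + 2 * ((C - H - 1) % N) else 0)

/-- The paper's `diag(r₀, c₀, v₀, 1, δ, n)` is
`brokenDiag n (r₀ - c₀) fun C => v₀ + δ * ((C - c₀) % n)`. -/
def brokenDiag (n : ℕ) (a : ℤ) (v : ℤ → ℤ) (r c : ℕ) : ℤ :=
  if (r : ℤ) % n = ((c : ℤ) + a) % n then v c else 0

variable {n : ℕ}

theorem Int.sum_Icc_ite_emod_eq (hn : 0 < n) (b : ℤ) (f : ℤ → ℤ) :
    ∑ c ∈ Finset.Icc 1 n, (if (c : ℤ) % n = b % n then f c else 0) = f ((b - 1) % n + 1) := by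
  have h0 : 0 ≤ (b - 1) % n := Int.emod_nonneg _ (by omega)
  have hlt : (b - 1) % n < n := Int.emod_lt_of_pos _ (by omega)
  set c₀ := ((b - 1) % n).toNat + 1
  have hc₀ : (c₀ : ℤ) = (b - 1) % n + 1 := by simp [c₀, Int.toNat_of_nonneg h0]
  have hiff : ∀ c ∈ Finset.Icc 1 n, (c : ℤ) % n = b % n ↔ c = c₀ := by
    intro c hc
    rw [Finset.mem_Icc] at hc
    have hc1 : ((c : ℤ) - 1) % n = c - 1 := Int.emod_eq_of_lt (by omega) (by omega)
    have hshift : (c : ℤ) % n = b % n ↔ ((c : ℤ) - 1) % n = (b - 1) % n :=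
      ⟨Int.ModEq.sub_right 1,
        fun h => (by simpa using Int.ModEq.add_right 1 h : (c : ℤ) ≡ b [ZMOD n])⟩
    rw [hshift, hc1]
    omega
  have hmem : c₀ ∈ Finset.Icc 1 n := Finset.mem_Icc.2 ⟨by omega, by omega⟩
  rw [Finset.sum_eq_single_of_mem c₀ hmem fun c hc hne => if_neg fun h => hne ((hiff c hc).1 h),
    if_pos ((hiff c₀ hmem).2 rfl), hc₀]

variable {n : ℕ}

theorem sum_brokenDiag_col (hn : 0 < n) (a : ℤ) (v : ℤ → ℤ) (c : ℕ) :
    ∑ r ∈ Finset.Icc 1 n, brokenDiag n a v r c = v c := by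
  simpa [brokenDiag] using Int.sum_Icc_ite_emod_eq hn ((c : ℤ) + a) fun _ => v c

theorem sum_brokenDiag_row (hn : 0 < n) (a : ℤ) (v : ℤ → ℤ) (r : ℕ) :
    ∑ c ∈ Finset.Icc 1 n, brokenDiag n a v r c = v ((r - a - 1) % n + 1) := by
  have hiff : ∀ c : ℕ, (r : ℤ) % n = ((c : ℤ) + a) % n ↔ (c : ℤ) % n = (r - a) % n := fun c =>
    ⟨fun h => (by simpa using (Int.ModEq.sub_right a h).symm : (c : ℤ) ≡ r - a [ZMOD n]),
      fun h => (by simpa using (Int.ModEq.add_right a h).symm : (r : ℤ) ≡ c + a [ZMOD n])⟩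
  simp only [brokenDiag, hiff]
  exact Int.sum_Icc_ite_emod_eq hn _ v

theorem M3_eq_sum_brokenDiag (h i r c : ℕ) :
    M3 n h i r c =
      brokenDiag n (2 * i) (fun C => n + 4 * n * i + 1 + 2 * (C - 1)) r c +
      brokenDiag n (2 * i + 1) (fun C => -(3 * n + 4 * n * i + 1 + 2 * (C - 1))) r c +
      brokenDiag n (2 * i - h) (fun C => -(n + 4 * n * i + 2 + 2 * ((C - h - 1) % n))) r c +
      brokenDiag n (2 * i + 1 - h) (fun C => 3 * n + 4 * n * i + 2 + 2 * ((C - h - 1) % n)) r c := by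
  simp only [M3, brokenDiag, add_sub_assoc, add_assoc]

theorem M3_row_col_sums_eq_zero_general (n h i : ℕ) (hn : 3 ≤ n) :
    (∀ r ∈ Finset.Icc 1 n, ∑ c ∈ Finset.Icc 1 n, M3 n h i r c = 0) ∧
    (∀ c ∈ Finset.Icc 1 n, ∑ r ∈ Finset.Icc 1 n, M3 n h i r c = 0) := by
  have hn0 : 0 < n := by omega
  simp only [M3_eq_sum_brokenDiag, Finset.sum_add_distrib]
  refine ⟨fun r _ => ?_, fun c _ => ?_⟩
  · have hshift (a : ℤ) : ((r - (a - h) - 1) % n + 1 - h - 1) % n = (r - a - 1) % n := by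
      rw [show (r - (a - h) - 1) % n + 1 - h - 1 = (r - (a - h) - 1) % n + -h by ring,
        Int.emod_add_emod]
      ring_nf
    simp only [sum_brokenDiag_row hn0, hshift]
    ring
  · simp only [sum_brokenDiag_col hn0]
    ring

/-- For odd `n ≥ 3`, `h = (n+1)/2` and `i ≥ 1`, every row sum and every column sum of the
contribution matrix `M3` of the `i`-th quadruple of added diagonals is zero over `ℤ`. -/
theorem M3_row_col_sums_eq_zero (n h i : ℕ) (hn : 3 ≤ n) (hodd : Odd n)
    (hh : 2 * h = n + 1) (hi : 1 ≤ i) :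
    (∀ r ∈ Finset.Icc 1 n, ∑ c ∈ Finset.Icc 1 n, M3 n h i r c = 0) ∧
    (∀ c ∈ Finset.Icc 1 n, ∑ r ∈ Finset.Icc 1 n, M3 n h i r c = 0) :=
  M3_row_col_sums_eq_zero_general n h i hn
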